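/- Let X and Y be finite nonempty sets, let P_XY be a pmf on X×Y, let n ∈ ℕ, and let P̃ be a pmf on X^n×Y^n that is absolutely continuous with respect to the n-fold product P_XY^n (coordinates paired as ((x_1,y_1),…,(x_n,y_n))). Let (X̃^n,Ỹ^n) ~ P̃. Then H(Ỹ^n|X̃^n) + D(P̃‖P_XY^n) ≥ Σ_{j=1}^n ( H(Ỹ_j|X̃_j) + D(P̃_{(X_j,Y_j)}‖P_XY) ), where P̃_{(X_j,Y_j)} is the j-th pair marginal of P̃ and conditional entropy is H(B|A) := H(joint law of (A,B)) − H(law of A). -/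

import Mathlib

open scoped BigOperators Classical

noncomputable section

/-- Kullback–Leibler divergence between two pmfs on a finite set (natural log,
with the convention `0·log(0/q) = 0` encoded by the term vanishing). -/
def KL {Ω : Type} [Fintype Ω] (P Q : Ω → ℝ) : ℝ :=
  ∑ ω, P ω * Real.log (P ω / Q ω)

/-- `P` is a probability mass function on the finite set `Ω`. -/
def IsPMF {Ω : Type} [Fintype Ω] (P : Ω → ℝ) : Prop :=
  (∀ ω, 0 ≤ P ω) ∧ ∑ ω, P ω = 1

/-- Pushforward (law of `φ`) of the pmf `P` under the map `φ`. -/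
def pushf {Ω A : Type} [Fintype Ω] (P : Ω → ℝ) (φ : Ω → A) : A → ℝ :=
  fun a => ∑ ω, if φ ω = a then P ω else 0

/-- Mutual information `I(φA; φB)` under the pmf `P`. -/
def MIof {Ω A B : Type} [Fintype Ω] [Fintype A] [Fintype B]
    (P : Ω → ℝ) (φA : Ω → A) (φB : Ω → B) : ℝ :=
  KL (pushf P fun ω => (φA ω, φB ω)) (fun p => pushf P φA p.1 * pushf P φB p.2)

/-- Shannon entropy of a pmf on a finite set (natural log). -/
def entropy {Ω : Type} [Fintype Ω] (P : Ω → ℝ) : ℝ :=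
  -∑ ω, P ω * Real.log (P ω)

end

/-! Writing `H(Ỹⁿ|X̃ⁿ) + D(P̃‖P_XYⁿ)` as a cross entropy, the joint entropy `H(X̃ⁿ, Ỹⁿ)` cancels and the
logarithm of the product `P_XYⁿ` splits into one cross-entropy term per coordinate; the same
cancellation happens in each summand on the right. What remains is `-H(X̃ⁿ) ≥ -Σ_j H(X̃_j)`,
i.e. subadditivity of entropy, which is Gibbs' inequality against the product of the marginals. -/

open Finset Real

section Pushforward

variable {Ω A : Type} [Fintype Ω]

lemma pushf_nonneg {P : Ω → ℝ} (hP : ∀ ω, 0 ≤ P ω) (φ : Ω → A) (a : A) :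
    0 ≤ pushf P φ a :=
  sum_nonneg fun ω _ => by split_ifs; exacts [hP ω, le_rfl]

lemma le_pushf_apply {P : Ω → ℝ} (hP : ∀ ω, 0 ≤ P ω) (φ : Ω → A) (ω : Ω) :
    P ω ≤ pushf P φ (φ ω) := by
  simpa [pushf] using single_le_sum (f := fun ω' => if φ ω' = φ ω then P ω' else 0)
    (fun ω' _ => by split_ifs; exacts [hP ω', le_rfl]) (mem_univ ω)

lemma pushf_eq_zero {P : Ω → ℝ} {φ : Ω → A} {a : A} (h : ∀ ω, φ ω = a → P ω = 0) :
    pushf P φ a = 0 :=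
  sum_eq_zero fun ω _ => by split_ifs with hω; exacts [h ω hω, rfl]

variable [Fintype A]

lemma sum_pushf_mul (P : Ω → ℝ) (φ : Ω → A) (g : A → ℝ) :
    ∑ a, pushf P φ a * g a = ∑ ω, P ω * g (φ ω) := by
  simp only [pushf, sum_mul, ite_mul, zero_mul]
  rw [sum_comm]
  simp

lemma sum_pushf (P : Ω → ℝ) (φ : Ω → A) : ∑ a, pushf P φ a = ∑ ω, P ω := by
  simpa using sum_pushf_mul P φ 1

lemma pushf_pushf {B : Type} (P : Ω → ℝ) (φ : Ω → A) (g : A → B) :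
    pushf (pushf P φ) g = pushf P fun ω => g (φ ω) := by
  funext b
  have h := sum_pushf_mul P φ fun a => if g a = b then 1 else 0
  simp only [mul_ite, mul_one, mul_zero] at h
  exact h

lemma IsPMF.pushf {P : Ω → ℝ} (hP : IsPMF P) (φ : Ω → A) : IsPMF (pushf P φ) :=
  ⟨pushf_nonneg hP.1 φ, (sum_pushf P φ).trans hP.2⟩

end Pushforward

section Divergence

variable {Ω : Type} [Fintype Ω]

lemma KL_eq_neg_entropy_sub {P Q : Ω → ℝ} (hac : ∀ ω, Q ω = 0 → P ω = 0) :
    KL P Q = -entropy P - ∑ ω, P ω * log (Q ω) := by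
  rw [KL, entropy, neg_neg, ← sum_sub_distrib]
  refine sum_congr rfl fun ω _ => ?_
  by_cases hP : P ω = 0
  · simp [hP]
  · rw [log_div hP fun hQ => hP (hac ω hQ)]; ring

lemma sum_mul_log_prod {ι : Type} [Fintype ι] {P : Ω → ℝ} (f : ι → Ω → ℝ)
    (hac : ∀ ω, ∏ i, f i ω = 0 → P ω = 0) :
    ∑ ω, P ω * log (∏ i, f i ω) = ∑ i, ∑ ω, P ω * log (f i ω) := by
  rw [sum_comm]
  refine sum_congr rfl fun ω _ => ?_
  by_cases hP : P ω = 0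
  · simp [hP]
  · rw [log_prod fun i _ hi => hP (hac ω (prod_eq_zero (mem_univ i) hi)), mul_sum]

lemma KL_nonneg {P Q : Ω → ℝ} (hP : IsPMF P) (hQ : ∀ ω, 0 ≤ Q ω) (hQ1 : ∑ ω, Q ω ≤ 1)
    (hac : ∀ ω, Q ω = 0 → P ω = 0) : 0 ≤ KL P Q := by
  have hterm : ∀ ω, P ω - Q ω ≤ P ω * log (P ω / Q ω) := by
    intro ω
    rcases (hP.1 ω).eq_or_lt with hP0 | hPpos
    · simp [← hP0, hQ ω]
    · have hQpos : 0 < Q ω := (hQ ω).lt_of_ne fun h => hPpos.ne' (hac ω h.symm)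
      have hmul := mul_le_mul_of_nonneg_left (log_le_sub_one_of_pos (div_pos hQpos hPpos)) hPpos.le
      rw [mul_sub, mul_div_cancel₀ _ hPpos.ne', mul_one] at hmul
      have hflip : log (P ω / Q ω) = -log (Q ω / P ω) := by rw [← log_inv, inv_div]
      rw [hflip]
      linarith
  calc 0 ≤ ∑ ω, (P ω - Q ω) := by rw [sum_sub_distrib, hP.2]; linarith
    _ ≤ KL P Q := sum_le_sum fun ω _ => hterm ω

end Divergence

lemma entropy_le_sum_entropy_marginal {ι X : Type} [Fintype ι] [DecidableEq ι] [Fintype X]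
    {μ : (ι → X) → ℝ} (hμ : IsPMF μ) :
    entropy μ ≤ ∑ j, entropy (pushf μ fun x => x j) := by
  set ν : (ι → X) → ℝ := fun x => ∏ j, pushf μ (fun y => y j) (x j)
  have hν : ∀ x, 0 ≤ ν x := fun x => prod_nonneg fun j _ => pushf_nonneg hμ.1 _ _
  have hν1 : ∑ x, ν x = 1 := by
    rw [← Fintype.prod_sum]
    simp [sum_pushf, hμ.2]
  have hac : ∀ x, ν x = 0 → μ x = 0 := by
    intro x hx
    obtain ⟨j, -, hj⟩ := prod_eq_zero_iff.mp hx
    exact le_antisymm (hj ▸ le_pushf_apply hμ.1 (fun y => y j) x) (hμ.1 x)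
  have hcross : ∑ x, μ x * log (ν x) = -∑ j, entropy (pushf μ fun x => x j) := by
    simp only [ν, sum_mul_log_prod _ hac, entropy, sum_pushf_mul μ _ fun a => log (pushf μ _ a),
      sum_neg_distrib, neg_neg]
  have := KL_nonneg hμ hν hν1.le hac
  rw [KL_eq_neg_entropy_sub hac, hcross] at this
  linarith

theorem cond_entropy_plus_kl_tensorization_general
    (X Y : Type) [Fintype X] [Fintype Y]
    (PXY : X × Y → ℝ)
    (n : ℕ)
    (Pt : (Fin n → X) × (Fin n → Y) → ℝ) (hPt : IsPMF Pt)
    (hac : ∀ p : (Fin n → X) × (Fin n → Y),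
      (∏ i, PXY (p.1 i, p.2 i)) = 0 → Pt p = 0) :
    (entropy Pt - entropy (pushf Pt Prod.fst))
        + KL Pt (fun p => ∏ i, PXY (p.1 i, p.2 i))
      ≥ ∑ j : Fin n,
          ((entropy (pushf Pt fun p => (p.1 j, p.2 j))
              - entropy (pushf Pt fun p => p.1 j))
            + KL (pushf Pt fun p => (p.1 j, p.2 j)) PXY) := by
  have hac_pair : ∀ j ab, PXY ab = 0 → pushf Pt (fun p => (p.1 j, p.2 j)) ab = 0 :=
    fun j ab hab => pushf_eq_zero fun p hp =>
      hac p (prod_eq_zero (mem_univ j) ((congrArg PXY hp).trans hab))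
  have hKL_pair : ∀ j, KL (pushf Pt fun p => (p.1 j, p.2 j)) PXY
      = -entropy (pushf Pt fun p => (p.1 j, p.2 j))
        - ∑ p, Pt p * log (PXY (p.1 j, p.2 j)) := fun j => by
    rw [KL_eq_neg_entropy_sub (hac_pair j), sum_pushf_mul Pt _ fun ab => log (PXY ab)]
  have hsub : entropy (pushf Pt Prod.fst) ≤ ∑ j, entropy (pushf Pt fun p => p.1 j) := by
    simpa only [pushf_pushf] using entropy_le_sum_entropy_marginal (hPt.pushf Prod.fst)
  rw [KL_eq_neg_entropy_sub hac,
    sum_mul_log_prod (fun i (p : (Fin n → X) × (Fin n → Y)) => PXY (p.1 i, p.2 i)) hac]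
  simp only [hKL_pair, sum_add_distrib, sum_sub_distrib, sum_neg_distrib]
  linarith

/-- **Tensorization inequality for conditional entropy plus KL divergence.**
For any pmf `P̃` on `Xⁿ × Yⁿ` absolutely continuous w.r.t. `P_XYⁿ`,
`H(Ỹⁿ|X̃ⁿ) + D(P̃‖P_XYⁿ) ≥ Σ_j (H(Ỹ_j|X̃_j) + D(P̃_{(X_j,Y_j)}‖P_XY))`,
where `H(B|A) = H(law of (A,B)) − H(law of A)`. -/
theorem cond_entropy_plus_kl_tensorization
    (X Y : Type) [Fintype X] [Fintype Y] [Nonempty X] [Nonempty Y]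
    (PXY : X × Y → ℝ) (hPXY : IsPMF PXY)
    (n : ℕ)
    (Pt : (Fin n → X) × (Fin n → Y) → ℝ) (hPt : IsPMF Pt)
    (hac : ∀ p : (Fin n → X) × (Fin n → Y),
      (∏ i, PXY (p.1 i, p.2 i)) = 0 → Pt p = 0) :
    (entropy Pt - entropy (pushf Pt Prod.fst))
        + KL Pt (fun p => ∏ i, PXY (p.1 i, p.2 i))
      ≥ ∑ j : Fin n,
          ((entropy (pushf Pt fun p => (p.1 j, p.2 j))
              - entropy (pushf Pt fun p => p.1 j))
            + KL (pushf Pt fun p => (p.1 j, p.2 j)) PXY) :=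
  cond_entropy_plus_kl_tensorization_general X Y PXY n Pt hPt hac
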